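/- Recovery of the minimal-angle axis: with n₀, k unit vectors, cos υ = (n₀,k), sin υ > 0, ω ∈ (0,π) with 1 − sin²υ sin²(ω/2) > 0, define k₀^i = [k^i cos(ω/2) − (n₀^i cos(ω/2) + n₀^j k^l ε_{lj}^i sin(ω/2)) cos υ] / (sin υ √(1 − sin²υ sin²(ω/2))). Then k₀ is a unit vector orthogonal to n₀. -/

import Mathlib

open Matrix Real

/-- Levi-Civita tensor on `Fin 3`, with `eps 0 1 2 = 1`. -/
noncomputable def eps (i j l : Fin 3) : ℝ :=
  if (i = 0 ∧ j = 1 ∧ l = 2) ∨ (i = 1 ∧ j = 2 ∧ l = 0) ∨ (i = 2 ∧ j = 0 ∧ l = 1) then 1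
  else if (i = 0 ∧ j = 2 ∧ l = 1) ∨ (i = 2 ∧ j = 1 ∧ l = 0) ∨ (i = 1 ∧ j = 0 ∧ l = 2) then -1
  else 0

/-- Rotation matrix `S_i{}^j = δ_i^j cos ω + k^l ε_{li}{}^j sin ω + k_i k^j (1 - cos ω)`. -/
noncomputable def rot (ω : ℝ) (k : Fin 3 → ℝ) : Matrix (Fin 3) (Fin 3) ℝ :=
  Matrix.of fun i j : Fin 3 =>
    (if i = j then Real.cos ω else 0) + (∑ l, k l * eps l i j) * Real.sin ω
      + k i * k j * (1 - Real.cos ω)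

/-!
The ε-sum is the cross product `k × n₀`, so the numerator of `k₀` is
`v = c k - cos υ (c n₀ + s (k × n₀))` with `c = cos (ω/2)`, `s = sin (ω/2)`.
Since `k × n₀` is orthogonal to `k` and `n₀` and `(n₀, k) = cos υ`, we get `(n₀, v) = 0`, and
Lagrange's identity `|k × n₀|² = 1 - cos² υ` gives
`|v|² = sin² υ (c² + s² cos² υ) = sin² υ (1 - sin² υ sin² (ω/2))`,
which is the square of the denominator.
-/

theorem sum_sum_mul_mul_eps_eq_cross (a b : Fin 3 → ℝ) (i : Fin 3) :
    ∑ j, ∑ l, a j * b l * eps l j i = (b ⨯₃ a) i := by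
  fin_cases i <;> simp [eps, cross_apply, Fin.sum_univ_three] <;> ring

section UnnormalizedAxis

variable {n k : Fin 3 → ℝ} {cv : ℝ}

/-- The numerator of `k₀`, with `c`, `s`, `cv` in place of `cos (ω/2)`, `sin (ω/2)`, `cos υ`. -/
def unnormalizedAxis (n k : Fin 3 → ℝ) (c s cv : ℝ) : Fin 3 → ℝ :=
  c • k - cv • (c • n + s • (k ⨯₃ n))

theorem dotProduct_unnormalizedAxis (hn : n ⬝ᵥ n = 1) (hcv : n ⬝ᵥ k = cv) (c s : ℝ) :
    n ⬝ᵥ unnormalizedAxis n k c s cv = 0 := by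
  simp only [unnormalizedAxis, dotProduct_sub, dotProduct_add, dotProduct_smul, smul_eq_mul,
    dot_cross_self, hn, hcv]
  ring

theorem unnormalizedAxis_dotProduct_self (hn : n ⬝ᵥ n = 1) (hk : k ⬝ᵥ k = 1)
    (hcv : n ⬝ᵥ k = cv) (c s : ℝ) :
    unnormalizedAxis n k c s cv ⬝ᵥ unnormalizedAxis n k c s cv
      = (1 - cv ^ 2) * (c ^ 2 + s ^ 2 * cv ^ 2) := by
  have hkn : k ⬝ᵥ n = cv := by rw [dotProduct_comm, hcv]
  have hcross : (k ⨯₃ n) ⬝ᵥ (k ⨯₃ n) = 1 - cv ^ 2 := by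
    rw [cross_dot_cross, hn, hk, hkn, hcv]; ring
  have hcross_k : (k ⨯₃ n) ⬝ᵥ k = 0 := by rw [dotProduct_comm, dot_self_cross]
  have hcross_n : (k ⨯₃ n) ⬝ᵥ n = 0 := by rw [dotProduct_comm, dot_cross_self]
  simp only [unnormalizedAxis, dotProduct_sub, sub_dotProduct, dotProduct_add, add_dotProduct,
    dotProduct_smul, smul_dotProduct, smul_eq_mul, dot_self_cross, dot_cross_self,
    hn, hk, hkn, hcv, hcross, hcross_k, hcross_n]
  ring

end UnnormalizedAxis

theorem recovered_axis_unit_orth_general (n₀ k : Fin 3 → ℝ)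
    (hn₀ : ∑ i, n₀ i * n₀ i = 1) (hk : ∑ i, k i * k i = 1)
    (υ : ℝ) (hcosυ : Real.cos υ = ∑ i, n₀ i * k i) (hsinυ : 0 < Real.sin υ)
    (ω : ℝ)
    (hpos : 0 < 1 - Real.sin υ ^ 2 * Real.sin (ω / 2) ^ 2)
    (k₀ : Fin 3 → ℝ)
    (hk₀ : ∀ i, k₀ i = (k i * Real.cos (ω / 2) -
        (n₀ i * Real.cos (ω / 2) + (∑ j, ∑ l, n₀ j * k l * eps l j i) * Real.sin (ω / 2)) *
          Real.cos υ) /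
      (Real.sin υ * Real.sqrt (1 - Real.sin υ ^ 2 * Real.sin (ω / 2) ^ 2))) :
    ∑ i, k₀ i * k₀ i = 1 ∧ ∑ i, n₀ i * k₀ i = 0 := by
  set D := 1 - Real.sin υ ^ 2 * Real.sin (ω / 2) ^ 2
  set v := unnormalizedAxis n₀ k (Real.cos (ω / 2)) (Real.sin (ω / 2)) (Real.cos υ)
  have hk₀v : k₀ = (Real.sin υ * √D)⁻¹ • v := by
    ext i
    rw [hk₀, sum_sum_mul_mul_eps_eq_cross]
    simp only [v, unnormalizedAxis, Pi.smul_apply, Pi.sub_apply, Pi.add_apply, smul_eq_mul]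
    ring
  have hv : v ⬝ᵥ v = (Real.sin υ * √D) ^ 2 := by
    rw [unnormalizedAxis_dotProduct_self hn₀ hk hcosυ.symm, mul_pow, Real.sq_sqrt hpos.le]
    simp only [D, Real.sin_sq υ, Real.cos_sq' (ω / 2)]
    ring
  have hne : Real.sin υ * √D ≠ 0 := (mul_pos hsinυ (Real.sqrt_pos.mpr hpos)).ne'
  change k₀ ⬝ᵥ k₀ = 1 ∧ n₀ ⬝ᵥ k₀ = 0
  rw [hk₀v]
  constructor
  · rw [dotProduct_smul, smul_dotProduct, hv, smul_eq_mul, smul_eq_mul]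
    field_simp
  · rw [dotProduct_smul, dotProduct_unnormalizedAxis hn₀ hcosυ.symm, smul_zero]

theorem recovered_axis_unit_orth (n₀ k : Fin 3 → ℝ)
    (hn₀ : ∑ i, n₀ i * n₀ i = 1) (hk : ∑ i, k i * k i = 1)
    (υ : ℝ) (hcosυ : Real.cos υ = ∑ i, n₀ i * k i) (hsinυ : 0 < Real.sin υ)
    (ω : ℝ) (hω : ω ∈ Set.Ioo 0 Real.pi)
    (hpos : 0 < 1 - Real.sin υ ^ 2 * Real.sin (ω / 2) ^ 2)
    (k₀ : Fin 3 → ℝ)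
    (hk₀ : ∀ i, k₀ i = (k i * Real.cos (ω / 2) -
        (n₀ i * Real.cos (ω / 2) + (∑ j, ∑ l, n₀ j * k l * eps l j i) * Real.sin (ω / 2)) *
          Real.cos υ) /
      (Real.sin υ * Real.sqrt (1 - Real.sin υ ^ 2 * Real.sin (ω / 2) ^ 2))) :
    ∑ i, k₀ i * k₀ i = 1 ∧ ∑ i, n₀ i * k₀ i = 0 :=
  recovered_axis_unit_orth_general n₀ k hn₀ hk υ hcosυ hsinυ ω hpos k₀ hk₀
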